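/- Let b ∈ ℝ, let α > 0 be real with n−1 < α < n for a natural number n, and let f : ℝ → ℝ. Define K(τ) = (1/Γ(n−α)) Σ_{j=0}^{b−1−τ} [Γ(j+n−α)/Γ(j+1)]·f(τ+j), the nabla right fractional sum _b∇^{−(n−α)} f(τ) for τ ∈ b−ℕ (sums over empty ranges being zero). Then for every integer m ≥ 1 and t = b−m, the Riemann nabla right fractional difference equals the binomial one: Σ_{i=0}^{n} (−1)^i C(n,i) K(t+i) = Σ_{k=0}^{m−1} (−1)^k binom(α,k)·f(t+k). -/

import Mathlib

/-- Generalized binomial coefficient binom(α,k) = α(α−1)⋯(α−k+1)/k!. -/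
noncomputable def rbinom (α : ℝ) (k : ℕ) : ℝ :=
  (∏ i ∈ Finset.range k, (α - i)) / (Nat.factorial k)

lemma rbinom_zero (x : ℝ) : rbinom x 0 = 1 := by simp [rbinom]

lemma rbinom_pascal (x : ℝ) (k : ℕ) :
    rbinom (x + 1) (k + 1) = rbinom x (k + 1) + rbinom x k := by
  have h1 : ∏ i ∈ Finset.range (k+1), (x + 1 - (i:ℝ))
      = (x + 1) * ∏ i ∈ Finset.range k, (x - (i:ℝ)) := by
    rw [Finset.prod_range_succ']
    have h : ∀ i ∈ Finset.range k, (x + 1 - (((i+1 : ℕ)):ℝ)) = x - (i:ℝ) := by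
      intro i _; push_cast; ring
    rw [Finset.prod_congr rfl h]
    push_cast; ring
  have h2 : ∏ i ∈ Finset.range (k+1), (x - (i:ℝ))
      = (∏ i ∈ Finset.range k, (x - (i:ℝ))) * (x - k) := Finset.prod_range_succ _ _
  unfold rbinom
  rw [h1, h2, Nat.factorial_succ]
  have hk : (Nat.factorial k : ℝ) ≠ 0 := Nat.cast_ne_zero.mpr (Nat.factorial_ne_zero k)
  have hk1 : ((k:ℝ) + 1) ≠ 0 := by positivity
  push_cast
  field_simp
  ring

lemma rbinom_vandermonde (y : ℝ) : ∀ n k : ℕ,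
    ∑ i ∈ Finset.range (k+1), (Nat.choose n i : ℝ) * rbinom y (k - i)
      = rbinom ((n : ℝ) + y) k := by
  intro n
  induction n with
  | zero =>
    intro k
    rw [Finset.sum_eq_single_of_mem 0 (Finset.mem_range.mpr (Nat.succ_pos k))]
    · simp
    · intro i _ hi
      rcases Nat.exists_eq_succ_of_ne_zero hi with ⟨j, rfl⟩
      simp
  | succ n ih =>
    intro k
    cases k with
    | zero => simp [rbinom_zero]
    | succ k =>
      rw [Finset.sum_range_succ' (fun i => (Nat.choose (n+1) i : ℝ) * rbinom y (k + 1 - i)) (k+1)]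
      have hsplit : ∀ i ∈ Finset.range (k+1),
          (Nat.choose (n+1) (i+1) : ℝ) * rbinom y (k + 1 - (i+1))
            = (Nat.choose n i : ℝ) * rbinom y (k - i)
              + (Nat.choose n (i+1) : ℝ) * rbinom y (k - i) := by
        intro i _
        have : k + 1 - (i + 1) = k - i := by omega
        rw [this, Nat.choose_succ_succ]
        push_cast
        ring
      rw [Finset.sum_congr rfl hsplit, Finset.sum_add_distrib, ih k]
      have hre : ∑ i ∈ Finset.range (k+1), (Nat.choose n (i+1) : ℝ) * rbinom y (k - i)
            + (Nat.choose (n+1) 0 : ℝ) * rbinom y (k + 1 - 0)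
          = ∑ i ∈ Finset.range (k+2), (Nat.choose n i : ℝ) * rbinom y (k + 1 - i) := by
        rw [Finset.sum_range_succ' (fun i => (Nat.choose n i : ℝ) * rbinom y (k + 1 - i)) (k+1)]
        simp only [Nat.choose_zero_right, Nat.cast_one, Nat.sub_zero]
        congr 1
        refine Finset.sum_congr rfl fun i _ => ?_
        have : k + 1 - (i + 1) = k - i := by omega
        rw [this]
      rw [add_assoc, hre, ih (k+1)]
      have : ((n:ℝ) + 1 + y) = ((n:ℝ) + y) + 1 := by ring
      push_cast
      rw [this, rbinom_pascal]
      ring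

lemma prod_neg_shift (β : ℝ) (k : ℕ) :
    ∏ i ∈ Finset.range k, (-β - (i:ℝ)) = (-1)^k * ∏ i ∈ Finset.range k, (β + (i:ℝ)) := by
  have h : ∀ i ∈ Finset.range k, (-β - (i:ℝ)) = (-1) * (β + (i:ℝ)) := by
    intro i _; ring
  rw [Finset.prod_congr rfl h, Finset.prod_mul_distrib, Finset.prod_const, Finset.card_range]

lemma gamma_prod (β : ℝ) (hβ : 0 < β) : ∀ k : ℕ,
    Real.Gamma ((k:ℝ) + β) = (∏ i ∈ Finset.range k, (β + (i:ℝ))) * Real.Gamma β := by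
  intro k
  induction k with
  | zero => simp
  | succ k ih =>
    have h : (((k+1 : ℕ)):ℝ) + β = ((k:ℝ) + β) + 1 := by push_cast; ring
    rw [h, Real.Gamma_add_one (by positivity), ih, Finset.prod_range_succ]
    ring

lemma c_eq (β : ℝ) (hβ : 0 < β) (k : ℕ) :
    Real.Gamma ((k:ℝ) + β) / Real.Gamma ((k:ℝ) + 1)
      = Real.Gamma β * ((-1)^k * rbinom (-β) k) := by
  rw [Real.Gamma_nat_eq_factorial, gamma_prod β hβ k]
  unfold rbinom
  rw [prod_neg_shift]
  have hpow : (-1:ℝ)^k * (-1:ℝ)^k = 1 := by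
    rw [← pow_add]
    exact Even.neg_one_pow ⟨k, rfl⟩
  have hre : (-1:ℝ)^k * (((-1:ℝ)^k * ∏ i ∈ Finset.range k, (β + (i:ℝ)))
        / (Nat.factorial k : ℝ))
      = (∏ i ∈ Finset.range k, (β + (i:ℝ))) / (Nat.factorial k : ℝ) := by
    rw [mul_div_assoc', ← mul_assoc, hpow, one_mul]
  rw [hre]
  ring

lemma tri_eq (g : ℕ → ℕ → ℝ) : ∀ m : ℕ,
    ∑ i ∈ Finset.range m, ∑ j ∈ Finset.range (m - i), g i j
      = ∑ k ∈ Finset.range m, ∑ i ∈ Finset.range (k+1), g i (k - i) := by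
  intro m
  induction m with
  | zero => simp
  | succ m ih =>
    have h1 : ∀ i ∈ Finset.range (m+1),
        ∑ j ∈ Finset.range (m + 1 - i), g i j
          = ∑ j ∈ Finset.range (m - i), g i j + g i (m - i) := by
      intro i hi
      have hi' : i ≤ m := by
        have := Finset.mem_range.mp hi; omega
      have : m + 1 - i = (m - i) + 1 := by omega
      rw [this, Finset.sum_range_succ]
    rw [Finset.sum_congr rfl h1, Finset.sum_add_distrib,
      Finset.sum_range_succ (fun i => ∑ j ∈ Finset.range (m - i), g i j) m]
    simp only [Nat.sub_self, Finset.range_zero, Finset.sum_empty, add_zero]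
    rw [ih, Finset.sum_range_succ (fun k => ∑ i ∈ Finset.range (k+1), g i (k - i)) m]

lemma tri_le (g : ℕ → ℕ → ℝ) (m M : ℕ) (hm : m ≤ M) :
    ∑ i ∈ Finset.range M, ∑ j ∈ Finset.range (m - i), g i j
      = ∑ k ∈ Finset.range m, ∑ i ∈ Finset.range (k+1), g i (k - i) := by
  rw [← tri_eq g m]
  symm
  apply Finset.sum_subset (Finset.range_subset_range.mpr hm)
  intro i _ hi
  have hmi : m ≤ i := Nat.le_of_not_lt (fun h => hi (Finset.mem_range.mpr h))
  rw [Nat.sub_eq_zero_of_le hmi]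
  simp

/-- The Riemann nabla right fractional difference coincides with the
binomial one at t = b−m, m ≥ 1, where K = ₑ∇^{−(n−α)} f (with sums over
negative/empty ranges equal to zero). -/
theorem nabla_right_riemann_eq_binomial (b α : ℝ) (n : ℕ)
    (hα : 0 < α) (hn1 : (n : ℝ) - 1 < α) (hn2 : α < n) (f K : ℝ → ℝ)
    (hK : ∀ q : ℤ, K (b - q) =
      (1 / Real.Gamma ((n : ℝ) - α)) *
        ∑ j ∈ Finset.range q.toNat,
          Real.Gamma ((j : ℝ) + ((n : ℝ) - α)) / Real.Gamma ((j : ℝ) + 1) *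
            f ((b - q) + j)) :
    ∀ m : ℕ, 1 ≤ m →
      ∑ i ∈ Finset.range (n + 1),
        (-1 : ℝ) ^ i * (n.choose i : ℝ) * K ((b - m) + i)
      = ∑ k ∈ Finset.range m,
        (-1 : ℝ) ^ k * rbinom α k * f ((b - m) + k) := by
  intro m hm
  set β : ℝ := (n : ℝ) - α with hβdef
  have hβ : 0 < β := by rw [hβdef]; linarith
  have hΓ : Real.Gamma β ≠ 0 := ne_of_gt (Real.Gamma_pos_of_pos hβ)
  -- Step 1: rewrite each K term as an explicit sum
  have step1 : ∀ i : ℕ, (-1 : ℝ)^i * (n.choose i : ℝ) * K ((b - m) + i)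
      = ∑ j ∈ Finset.range (m - i),
          ((-1:ℝ)^i * (n.choose i : ℝ) * ((-1:ℝ)^j * rbinom (-β) j))
            * f ((b - m) + ((i:ℝ) + (j:ℝ))) := by
    intro i
    have h0 : ((b : ℝ) - m) + i = b - (((m : ℤ) - (i : ℤ) : ℤ) : ℝ) := by
      push_cast; ring
    rw [h0, hK ((m : ℤ) - (i : ℤ)), Int.toNat_sub m i, Finset.mul_sum, Finset.mul_sum]
    refine Finset.sum_congr rfl fun j hj => ?_
    rw [c_eq β hβ j]
    have harg : (b - (((m : ℤ) - (i : ℤ) : ℤ) : ℝ)) + (j:ℝ)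
        = (b - m) + ((i:ℝ) + (j:ℝ)) := by push_cast; ring
    rw [harg]
    field_simp
  rw [Finset.sum_congr rfl (fun i _ => step1 i)]
  -- Step 2: extend the outer range to N = max (n+1) m
  set N := max (n+1) m with hN
  have hext : ∑ i ∈ Finset.range (n+1), ∑ j ∈ Finset.range (m - i),
        ((-1:ℝ)^i * (n.choose i : ℝ) * ((-1:ℝ)^j * rbinom (-β) j))
          * f ((b - m) + ((i:ℝ) + (j:ℝ)))
      = ∑ i ∈ Finset.range N, ∑ j ∈ Finset.range (m - i),
        ((-1:ℝ)^i * (n.choose i : ℝ) * ((-1:ℝ)^j * rbinom (-β) j))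
          * f ((b - m) + ((i:ℝ) + (j:ℝ))) := by
    apply Finset.sum_subset (Finset.range_subset_range.mpr (le_max_left _ _))
    intro i _ hi
    have hni : n < i := by
      simp only [Finset.mem_range, not_lt] at hi; omega
    simp [Nat.choose_eq_zero_of_lt hni]
  rw [hext, tri_le (fun i j => ((-1:ℝ)^i * (n.choose i : ℝ)
        * ((-1:ℝ)^j * rbinom (-β) j)) * f ((b - m) + ((i:ℝ) + (j:ℝ)))) m N
      (le_max_right _ _)]
  -- Step 3: evaluate the inner sums by Vandermonde
  refine Finset.sum_congr rfl fun k hk => ?_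
  have hin : ∀ i ∈ Finset.range (k+1),
      ((-1:ℝ)^i * (n.choose i : ℝ) * ((-1:ℝ)^(k-i) * rbinom (-β) (k-i)))
          * f ((b - m) + ((i:ℝ) + ((k-i : ℕ):ℝ)))
        = ((-1:ℝ)^k * ((n.choose i : ℝ) * rbinom (-β) (k-i))) * f ((b - m) + (k:ℝ)) := by
    intro i hi
    have hik : i ≤ k := by
      have := Finset.mem_range.mp hi; omega
    have hc : ((k - i : ℕ) : ℝ) = (k:ℝ) - (i:ℝ) := by
      push_cast [hik]; ring
    have harg : ((b - (m:ℝ)) + ((i:ℝ) + ((k-i : ℕ):ℝ))) = (b - m) + (k:ℝ) := by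
      rw [hc]; ring
    rw [harg, show ((-1:ℝ))^k = (-1:ℝ)^i * (-1:ℝ)^(k-i) from by
      rw [← pow_add]; congr 1; omega]
    ring
  rw [Finset.sum_congr rfl hin, ← Finset.sum_mul, ← Finset.mul_sum,
    rbinom_vandermonde (-β) n k]
  have : (n:ℝ) + -β = α := by rw [hβdef]; ring
  rw [this]
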